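/- arXiv:2103.00942 — 2 statements merged into one kernel-verified Lean document; each statement's English description precedes it below -/
import Mathlib

section
/- Let F = (A, f) be a complete fuzzy finite automaton over an alphabet X with |A| = n. If two states a, b ∈ A are D3-merged by some word, then they are D3-merged by a word of length at most n(n−1)/2. -/
/-!
Take a merging word `w` of minimal length `k`, merging `a` and `b` into `c`. For every
`i < k` split the runs at position `i`: there are `pᵢ ∈ F(a, w[:i])` and `qᵢ ∈ F(b, w[:i])`
from which `w[i:]` still leads to `c`. By minimality `pᵢ ≠ qᵢ`, and the unordered pairs
`{pᵢ, qᵢ}` are pairwise distinct, since `{pᵢ, qᵢ} = {pⱼ, qⱼ}` with `i < j` would let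
`w[:i] ++ w[j:]` merge `a` and `b`. So `k` is at most the number `n(n-1)/2` of
two-element subsets of `A`.
-/

open scoped Classical

/-- Extended fuzzy transition function `f*` of a fuzzy finite automaton. -/
noncomputable def fstar {A X : Type*} [Fintype A] [Nonempty A]
    (f : A → X → A → unitInterval) : A → List X → A → unitInterval
  | a, [], b => if b = a then 1 else 0
  | a, x :: v, b => Finset.univ.sup' Finset.univ_nonempty fun c => min (f a x c) (fstar f c v b)

/-- `F(a, w)`: the set of states reachable from `a` by `w` with positive degree. -/
def freach {A X : Type*} [Fintype A] [Nonempty A]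
    (f : A → X → A → unitInterval) (a : A) (w : List X) : Set A :=
  {b | 0 < fstar f a w b}

namespace FuzzyAutomaton

variable {A X : Type*} [Fintype A] [Nonempty A] {f : A → X → A → unitInterval}

def IsMergingWord (f : A → X → A → unitInterval) (a b : A) (w : List X) : Prop :=
  (freach f a w ∩ freach f b w).Nonempty

theorem freach_nil (a : A) : freach f a [] = {a} := by
  ext c
  by_cases hc : c = a <;> simp [freach, fstar, hc]

theorem mem_freach_cons {a c : A} {x : X} {v : List X} :
    c ∈ freach f a (x :: v) ↔ ∃ d, 0 < f a x d ∧ c ∈ freach f d v := by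
  simp only [freach, Set.mem_ofPred_eq, fstar, Finset.lt_sup'_iff, Finset.mem_univ, true_and,
    lt_min_iff]

theorem mem_freach_append {a c : A} {u v : List X} :
    c ∈ freach f a (u ++ v) ↔ ∃ d ∈ freach f a u, c ∈ freach f d v := by
  induction u generalizing a with
  | nil => simp [freach_nil]
  | cons x u ih =>
    simp only [List.cons_append, mem_freach_cons, ih]
    aesop

theorem exists_mem_freach_take_drop {a c : A} {w : List X} (hc : c ∈ freach f a w) (i : ℕ) :
    ∃ p ∈ freach f a (w.take i), c ∈ freach f p (w.drop i) := by
  rwa [← mem_freach_append, List.take_append_drop]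

theorem length_le_of_isMergingWord_minimal {a b : A} {w : List X}
    (hw : IsMergingWord f a b w)
    (hmin : ∀ v : List X, v.length < w.length → ¬ IsMergingWord f a b v) :
    w.length ≤ Fintype.card A * (Fintype.card A - 1) / 2 := by
  obtain ⟨c, hca, hcb⟩ := hw
  choose p hpa hpc using exists_mem_freach_take_drop hca
  choose q hqb hqc using exists_mem_freach_take_drop hcb
  have hne (i : Fin w.length) : p i ≠ q i := fun hpq =>
    hmin _ (by simp) ⟨p i, hpa i, hpq ▸ hqb i⟩
  have hcut {i j : Fin w.length} (hij : i < j) : s(p i, q i) ≠ s(p j, q j) := by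
    have hlen : (w.take i ++ w.drop j).length < w.length := by
      simp only [List.length_append, List.length_take, List.length_drop]; omega
    intro hpair
    rcases Sym2.eq_iff.1 hpair with ⟨hp, hq⟩ | ⟨hp, hq⟩
    · exact hmin _ hlen ⟨c, mem_freach_append.2 ⟨p i, hpa i, hp ▸ hpc j⟩,
        mem_freach_append.2 ⟨q i, hqb i, hq ▸ hqc j⟩⟩
    · exact hmin _ hlen ⟨c, mem_freach_append.2 ⟨p i, hpa i, hp ▸ hqc j⟩,
        mem_freach_append.2 ⟨q i, hqb i, hq ▸ hpc j⟩⟩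
  let pair : Fin w.length → {z : Sym2 A // ¬ z.IsDiag} :=
    fun i => ⟨s(p i, q i), Sym2.mk_isDiag_iff.not.2 (hne i)⟩
  have hpair : Function.Injective pair := by
    intro i j hij
    by_contra hij_ne
    rcases lt_or_gt_of_ne hij_ne with hlt | hlt
    · exact hcut hlt (congrArg Subtype.val hij)
    · exact hcut hlt (congrArg Subtype.val hij).symm
  simpa only [Fintype.card_fin, Sym2.card_subtype_not_diag, Nat.choose_two_right] using
    Fintype.card_le_of_injective pair hpair

end FuzzyAutomaton

open FuzzyAutomaton in
theorem stmt6_general {A X : Type*} [Fintype A] [Nonempty A]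
    (f : A → X → A → unitInterval)
    (a b : A)
    (h : ∃ w : List X, (freach f a w ∩ freach f b w).Nonempty) :
    ∃ w : List X, w.length ≤ Fintype.card A * (Fintype.card A - 1) / 2 ∧
      (freach f a w ∩ freach f b w).Nonempty := by
  have hex : ∃ k, ∃ w : List X, w.length = k ∧ IsMergingWord f a b w :=
    let ⟨w, hw⟩ := h; ⟨_, w, rfl, hw⟩
  obtain ⟨w, hlen, hw⟩ := Nat.find_spec hex
  refine ⟨w, length_le_of_isMergingWord_minimal hw fun v hv hv' => ?_, hw⟩
  exact Nat.find_min hex (hlen ▸ hv) ⟨v, rfl, hv'⟩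

/-- In a complete `n`-state FFA, if two states are D3-merged by some word, then they are
D3-merged by a word of length at most `n(n-1)/2`. -/
theorem stmt6 {A X : Type*} [Fintype X] [Nonempty X] [Fintype A] [Nonempty A]
    (f : A → X → A → unitInterval)
    (hcomp : ∀ (a : A) (x : X), ∃ b, 0 < f a x b) (a b : A)
    (h : ∃ w : List X, (freach f a w ∩ freach f b w).Nonempty) :
    ∃ w : List X, w.length ≤ Fintype.card A * (Fintype.card A - 1) / 2 ∧
      (freach f a w ∩ freach f b w).Nonempty :=
  stmt6_general f a b h
end

section
/- If F = (A, f) is a normal fuzzy finite automaton over an alphabet X, then X*DD_1(F) = DD_1(F), X*DD_2(F)X* = DD_2(F), and X*DD_3(F)X* = DD_3(F). -/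
open scoped Classical

/-- A word is DD1-directing: some state `c` is reached from every state with the same
positive degree `r`, and no other state is reachable. -/
def IsDD1 {A X : Type*} [Fintype A] [Nonempty A] (f : A → X → A → unitInterval)
    (w : List X) : Prop :=
  ∃ (c : A) (r : unitInterval), 0 < r ∧
    ∀ a, fstar f a w c = r ∧ ∀ b, b ≠ c → fstar f a w b = 0

/-- A word is DD2-directing: the fuzzy set of reached states is independent of the start. -/
def IsDD2 {A X : Type*} [Fintype A] [Nonempty A] (f : A → X → A → unitInterval)
    (w : List X) : Prop :=
  ∀ a b c, fstar f a w c = fstar f b w c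

/-- A word is DD3-directing: some state `c` has positive and maximal reachability degree
from every state. -/
def IsDD3 {A X : Type*} [Fintype A] [Nonempty A] (f : A → X → A → unitInterval)
    (w : List X) : Prop :=
  ∃ c, ∀ a, 0 < fstar f a w c ∧ ∀ b, fstar f a w b ≤ fstar f a w c

def DD1set {A X : Type*} [Fintype A] [Nonempty A] (f : A → X → A → unitInterval) :
    Set (List X) := {w | IsDD1 f w}

def DD2set {A X : Type*} [Fintype A] [Nonempty A] (f : A → X → A → unitInterval) :
    Set (List X) := {w | IsDD2 f w}

def DD3set {A X : Type*} [Fintype A] [Nonempty A] (f : A → X → A → unitInterval) :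
    Set (List X) := {w | IsDD3 f w}

/-- Concatenation of languages: `KL = {uv : u ∈ K, v ∈ L}`. -/
def conc {X : Type*} (K L : Set (List X)) : Set (List X) :=
  {w | ∃ u ∈ K, ∃ v ∈ L, w = u ++ v}

/-! By normality every word `u` leads from every state `a` to some state with degree `1`.
Since `f*(a, uv, b) = ⋁_c f*(a, u, c) ∧ f*(c, v, b)`, prefixing `u` therefore leaves
unchanged every column `b ↦ f*(·, v, b)` that does not depend on the start state; this gives
closure under prefixes for DD1 and DD2, and for DD3 the maximal column of `v` stays maximal
and positive. Under suffixes, DD2 is preserved because `f*(a, vz, ·)` depends on `a` only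
through the row `f*(a, v, ·)`, and a DD3 word `v` with maximal state `c` extends to `vz` by
following `z` from `c` to a state of degree `1`. -/

lemma unitInterval.min_one_left (r : unitInterval) : min 1 r = r :=
  min_eq_right unitInterval.le_one'

lemma unitInterval.min_one_right (r : unitInterval) : min r 1 = r :=
  min_eq_left unitInterval.le_one'

section FuzzyAutomaton

variable {A X : Type*} [Fintype A] [Nonempty A] {f : A → X → A → unitInterval}

lemma fstar_cons (a b : A) (x : X) (v : List X) :
    fstar f a (x :: v) b =
      Finset.univ.sup' Finset.univ_nonempty fun c => min (f a x c) (fstar f c v b) := rfl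

lemma fstar_nil_append (a b : A) (v : List X) :
    fstar f a v b =
      Finset.univ.sup' Finset.univ_nonempty fun c => min (fstar f a [] c) (fstar f c v b) := by
  refine le_antisymm ?_ (Finset.sup'_le _ _ fun c _ => ?_)
  · refine le_trans ?_ (Finset.le_sup' _ (Finset.mem_univ a))
    simp only [fstar, if_true, unitInterval.min_one_left, le_refl]
  · by_cases h : c = a
    · exact h ▸ min_le_right _ _
    · simp only [fstar, if_neg h]
      exact (min_le_left _ _).trans unitInterval.nonneg'

lemma fstar_append (a b : A) (u v : List X) :
    fstar f a (u ++ v) b =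
      Finset.univ.sup' Finset.univ_nonempty fun c => min (fstar f a u c) (fstar f c v b) := by
  induction u generalizing a with
  | nil => exact fstar_nil_append a b v
  | cons x u ih =>
    simp only [List.cons_append, fstar_cons, ih, Finset.sup'_inf_distrib_left,
      Finset.sup'_inf_distrib_right, min_assoc]
    exact Finset.sup'_comm _ _ _

lemma le_fstar_append (a c b : A) (u v : List X) :
    min (fstar f a u c) (fstar f c v b) ≤ fstar f a (u ++ v) b :=
  (fstar_append a b u v).symm ▸
    Finset.le_sup' (fun c => min (fstar f a u c) (fstar f c v b)) (Finset.mem_univ c)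

lemma fstar_append_le {a b : A} {u v : List X} {r : unitInterval}
    (h : ∀ c, min (fstar f a u c) (fstar f c v b) ≤ r) : fstar f a (u ++ v) b ≤ r :=
  (fstar_append a b u v).symm ▸ Finset.sup'_le _ _ fun c _ => h c

variable (hf : ∀ a x, ∃ b, f a x b = 1)
include hf

lemma exists_fstar_eq_one (a : A) (w : List X) : ∃ b, fstar f a w b = 1 := by
  induction w generalizing a with
  | nil => exact ⟨a, if_pos rfl⟩
  | cons x v ih =>
    obtain ⟨c, hc⟩ := hf a x
    obtain ⟨b, hb⟩ := ih c
    refine ⟨b, le_antisymm unitInterval.le_one' ?_⟩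
    calc 1 = min (f a x c) (fstar f c v b) := by rw [hc, hb, unitInterval.min_one_left]
      _ ≤ fstar f a (x :: v) b :=
        Finset.le_sup' (fun c => min (f a x c) (fstar f c v b)) (Finset.mem_univ c)

lemma fstar_append_of_forall_eq {v : List X} {b : A} {r : unitInterval}
    (hv : ∀ c, fstar f c v b = r) (a : A) (u : List X) : fstar f a (u ++ v) b = r := by
  obtain ⟨d, hd⟩ := exists_fstar_eq_one hf a u
  refine le_antisymm (fstar_append_le fun c => (hv c) ▸ min_le_right _ _) ?_
  calc r = min (fstar f a u d) (fstar f d v b) := by rw [hd, hv d, unitInterval.min_one_left]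
    _ ≤ fstar f a (u ++ v) b := le_fstar_append a d b u v

lemma IsDD1.append_left {v : List X} (hv : IsDD1 f v) (u : List X) : IsDD1 f (u ++ v) := by
  obtain ⟨c, r, hr, hv⟩ := hv
  exact ⟨c, r, hr, fun a => ⟨fstar_append_of_forall_eq hf (fun e => (hv e).1) a u,
    fun b hb => fstar_append_of_forall_eq hf (fun e => (hv e).2 b hb) a u⟩⟩

lemma IsDD2.append_left {v : List X} (hv : IsDD2 f v) (u : List X) : IsDD2 f (u ++ v) :=
  fun a b c => (fstar_append_of_forall_eq hf (fun e => hv e a c) a u).trans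
    (fstar_append_of_forall_eq hf (fun e => hv e a c) b u).symm

omit hf in
lemma IsDD2.append_right {v : List X} (hv : IsDD2 f v) (z : List X) : IsDD2 f (v ++ z) := by
  intro a b c
  simp only [fstar_append, hv a b]

lemma IsDD3.append_left {v : List X} (hv : IsDD3 f v) (u : List X) : IsDD3 f (u ++ v) := by
  obtain ⟨c, hc⟩ := hv
  refine ⟨c, fun a => ⟨?_, fun b => fstar_append_le fun e => ?_⟩⟩
  · obtain ⟨d, hd⟩ := exists_fstar_eq_one hf a u
    calc 0 < fstar f d v c := (hc d).1
      _ = min (fstar f a u d) (fstar f d v c) := by rw [hd, unitInterval.min_one_left]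
      _ ≤ fstar f a (u ++ v) c := le_fstar_append a d c u v
  · exact (min_le_min_left _ ((hc e).2 b)).trans (le_fstar_append a e c u v)

lemma IsDD3.append_right {v : List X} (hv : IsDD3 f v) (z : List X) : IsDD3 f (v ++ z) := by
  obtain ⟨c, hc⟩ := hv
  obtain ⟨c', hc'⟩ := exists_fstar_eq_one hf c z
  have hle (a : A) : fstar f a v c ≤ fstar f a (v ++ z) c' :=
    calc fstar f a v c = min (fstar f a v c) (fstar f c z c') := by
          rw [hc', unitInterval.min_one_right]
      _ ≤ fstar f a (v ++ z) c' := le_fstar_append a c c' v z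
  refine ⟨c', fun a => ⟨(hc a).1.trans_le (hle a), fun b => ?_⟩⟩
  exact (fstar_append_le fun e => (min_le_left _ _).trans ((hc a).2 e)).trans (hle a)

end FuzzyAutomaton

section Languages

variable {X : Type*} {L : Set (List X)}

lemma conc_univ_eq_self (h : ∀ u w, w ∈ L → u ++ w ∈ L) : conc Set.univ L = L := by
  ext w
  refine ⟨?_, fun hw => ⟨[], trivial, w, hw, rfl⟩⟩
  rintro ⟨u, -, v, hv, rfl⟩
  exact h u v hv

lemma conc_univ_right_eq_self (h : ∀ w z, w ∈ L → w ++ z ∈ L) : conc L Set.univ = L := by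
  ext w
  refine ⟨?_, fun hw => ⟨w, hw, [], trivial, (List.append_nil w).symm⟩⟩
  rintro ⟨v, hv, z, -, rfl⟩
  exact h v z hv

lemma conc_univ_conc_univ_eq_self (hl : ∀ u w, w ∈ L → u ++ w ∈ L)
    (hr : ∀ w z, w ∈ L → w ++ z ∈ L) : conc Set.univ (conc L Set.univ) = L := by
  rw [conc_univ_right_eq_self hr, conc_univ_eq_self hl]

end Languages

theorem stmt12_general {A X : Type*} [Fintype A] [Nonempty A]
    (f : A → X → A → unitInterval)
    (hnormal : ∀ (a : A) (x : X), ∃ b, f a x b = 1) :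
    conc Set.univ (DD1set f) = DD1set f ∧
    conc Set.univ (conc (DD2set f) Set.univ) = DD2set f ∧
    conc Set.univ (conc (DD3set f) Set.univ) = DD3set f :=
  ⟨conc_univ_eq_self fun u _ hw => IsDD1.append_left hnormal hw u,
    conc_univ_conc_univ_eq_self (fun u _ hw => IsDD2.append_left hnormal hw u)
      (fun _ z hw => IsDD2.append_right hw z),
    conc_univ_conc_univ_eq_self (fun u _ hw => IsDD3.append_left hnormal hw u)
      (fun _ z hw => IsDD3.append_right hnormal hw z)⟩

/-- For a normal FFA `F`: `X*DD_1(F) = DD_1(F)`, `X*DD_2(F)X* = DD_2(F)` and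
`X*DD_3(F)X* = DD_3(F)`. -/
theorem stmt12 {A X : Type*} [Fintype X] [Nonempty X] [Fintype A] [Nonempty A]
    (f : A → X → A → unitInterval)
    (hnormal : ∀ (a : A) (x : X), ∃ b, f a x b = 1) :
    conc Set.univ (DD1set f) = DD1set f ∧
    conc Set.univ (conc (DD2set f) Set.univ) = DD2set f ∧
    conc Set.univ (conc (DD3set f) Set.univ) = DD3set f :=
  stmt12_general f hnormal
end
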